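/- In the 2×2 hospital game with P₁ = 1000, P₂ = 4, a₁ = 1/4, a₂ = 3/4 (so the payoff matrix is: both choose r₁ gives (250, 750); q₁ chooses r₁ and q₂ chooses r₂ gives (1000, 4); q₁ chooses r₂ and q₂ chooses r₁ gives (4, 1000); both choose r₂ gives (1, 3)), the profile in which both hospitals choose r₁ is a Nash equilibrium, and it is the unique Nash equilibrium of the game; in particular in the unique Nash equilibrium the two hospitals do not diversify their choices. -/

import Mathlib

/-!
Each of the four profiles is an equilibrium exactly when two linear inequalities between
`P₁, P₂, P₁aᵢ, P₂aᵢ` hold. When the small group `P₂` lies below both shares `P₁a₁, P₁a₂` of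
the large one, sharing `r₁` beats switching to `r₂` for both hospitals, whereas from every
other profile some hospital gains by moving to `r₁`.
-/

/-- The two wards a hospital can choose to make excel. -/
inductive Ward : Type
  | r1 | r2
deriving DecidableEq

open Ward

/-- The size of the patient group associated with a ward. -/
def grp (P1 P2 : ℝ) : Ward → ℝ
  | r1 => P1
  | r2 => P2

/-- Payoff of hospital q₁ when q₁ chooses `s1` and q₂ chooses `s2`:
if both choose the same ward, q₁ gets the fraction `a1` of that ward's group;
otherwise q₁ gets the full group of its chosen ward. -/
def pay1 (P1 P2 a1 : ℝ) (s1 s2 : Ward) : ℝ :=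
  if s1 = s2 then grp P1 P2 s1 * a1 else grp P1 P2 s1

/-- Payoff of hospital q₂ when q₁ chooses `s1` and q₂ chooses `s2`:
if both choose the same ward, q₂ gets the fraction `a2` of that ward's group;
otherwise q₂ gets the full group of its chosen ward. -/
def pay2 (P1 P2 a2 : ℝ) (s1 s2 : Ward) : ℝ :=
  if s1 = s2 then grp P1 P2 s2 * a2 else grp P1 P2 s2

/-- A strategy profile `(s1, s2)` is a Nash equilibrium if neither hospital can
strictly increase its payoff by unilaterally changing its strategy. -/
def IsNash (P1 P2 a1 a2 : ℝ) (s1 s2 : Ward) : Prop :=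
  (∀ t1 : Ward, pay1 P1 P2 a1 t1 s2 ≤ pay1 P1 P2 a1 s1 s2) ∧
  (∀ t2 : Ward, pay2 P1 P2 a2 s1 t2 ≤ pay2 P1 P2 a2 s1 s2)

theorem Ward.forall {p : Ward → Prop} : (∀ w, p w) ↔ p r1 ∧ p r2 :=
  ⟨fun h => ⟨h r1, h r2⟩, fun ⟨h1, h2⟩ w => by cases w <;> assumption⟩

section

variable {P1 P2 a1 a2 : ℝ}

theorem isNash_r1_r1_iff : IsNash P1 P2 a1 a2 r1 r1 ↔ P2 ≤ P1 * a1 ∧ P2 ≤ P1 * a2 := by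
  simp [IsNash, Ward.forall, pay1, pay2, grp]

theorem isNash_r1_r2_iff : IsNash P1 P2 a1 a2 r1 r2 ↔ P2 * a1 ≤ P1 ∧ P1 * a2 ≤ P2 := by
  simp [IsNash, Ward.forall, pay1, pay2, grp]

theorem isNash_r2_r1_iff : IsNash P1 P2 a1 a2 r2 r1 ↔ P1 * a1 ≤ P2 ∧ P2 * a2 ≤ P1 := by
  simp [IsNash, Ward.forall, pay1, pay2, grp]

theorem isNash_r2_r2_iff : IsNash P1 P2 a1 a2 r2 r2 ↔ P1 ≤ P2 * a1 ∧ P1 ≤ P2 * a2 := by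
  simp [IsNash, Ward.forall, pay1, pay2, grp]

theorem isNash_iff_eq_r1_of_lt_mul (hP2 : 0 ≤ P2) (ha1 : 0 ≤ a1) (ha1' : a1 ≤ 1)
    (h1 : P2 < P1 * a1) (h2 : P2 < P1 * a2) (s1 s2 : Ward) :
    IsNash P1 P2 a1 a2 s1 s2 ↔ s1 = r1 ∧ s2 = r1 := by
  cases s1 <;> cases s2 <;>
    simp only [isNash_r1_r1_iff, isNash_r1_r2_iff, isNash_r2_r1_iff, isNash_r2_r2_iff,
      reduceCtorEq, and_true, and_false, iff_true, iff_false, not_and, not_le]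
  · exact ⟨h1.le, h2.le⟩
  · exact fun _ => h2
  · exact fun h => absurd h (not_le.2 h1)
  · intro h
    nlinarith [mul_le_mul_of_nonneg_left ha1' hP2]

end

/-- Example 2: with P₁ = 1000, P₂ = 4, a₁ = 1/4, a₂ = 3/4, the profile
(r₁, r₁) is a Nash equilibrium, it is the unique Nash equilibrium, and in
particular in the unique Nash equilibrium the hospitals do not diversify. -/
theorem stmt2 :
    IsNash 1000 4 (1/4) (3/4) r1 r1 ∧
    (∀ s1 s2 : Ward, IsNash 1000 4 (1/4) (3/4) s1 s2 ↔ (s1 = r1 ∧ s2 = r1)) ∧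
    (∀ s1 s2 : Ward, IsNash 1000 4 (1/4) (3/4) s1 s2 → s1 = s2) := by
  have hNash := isNash_iff_eq_r1_of_lt_mul (P1 := 1000) (P2 := 4) (a1 := 1/4) (a2 := 3/4)
    (by norm_num) (by norm_num) (by norm_num) (by norm_num) (by norm_num)
  refine ⟨(hNash r1 r1).2 ⟨rfl, rfl⟩, hNash, fun s1 s2 h => ?_⟩
  obtain ⟨rfl, rfl⟩ := (hNash s1 s2).1 h
  rfl
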